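/- arXiv:2005.10599 — 2 statements merged into one kernel-verified Lean document; each statement's English description precedes it below -/
import Mathlib

section
/- Fix r > 0, ρ > 0, λ₁, λ₂ ∈ ℝ and α ∈ ℝ, and set C̄ = r (λ₁ − λ₂) sin(2α) / (2 ρ²). Then there exist p₀ > 1 and K > 0 such that for every p ≥ p₀ the function f_p attains a global maximum on ℝ, and every point θ_p ∈ (−π/2, π/2] at which f_p attains its global maximum satisfies |θ_p − C̄/p| ≤ K/p². (Asymptotics of the optimal control for the p-Hamiltonian at non-characteristic points, diagonal Hessian.) -/
open Real Set

/-!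
Doubling the angle, `f_p θ = A_p + (u_p cos 2θ + v sin 2θ) / 2` with
`u_p = (p - 1) ρ² / r + (λ₂ - λ₁) cos 2α` and `v = (λ₁ - λ₂) sin 2α`. Once `u_p > 0` this equals
`A_p + √(u_p² + v²) cos (2θ - arctan (v / u_p)) / 2`, so the only maximizer in `(-π/2, π/2]` is
`arctan (v / u_p) / 2`. Since `u_p = p ρ² / r + O(1)`, we get `v / u_p = 2 C̄ / p + O(1/p²)`, and
`|arctan x - x| ≤ |x|³` (mean value theorem) turns this into `θ_p = C̄ / p + O(1/p²)`.
-/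

theorem abs_arctan_sub_self_le (x : ℝ) : |arctan x - x| ≤ |x| ^ 3 := by
  have hderiv : ∀ y, HasDerivAt (fun t => arctan t - t) (1 / (1 + y ^ 2) - 1) y :=
    fun y => (hasDerivAt_arctan y).sub (hasDerivAt_id' y)
  have hbound : ∀ y ∈ Icc (-|x|) |x|, ‖1 / (1 + y ^ 2) - 1‖ ≤ |x| ^ 2 := by
    intro y hy
    have hyx : y ^ 2 ≤ |x| ^ 2 := sq_le_sq' hy.1 hy.2
    have hy : 1 / (1 + y ^ 2) - 1 = -(y ^ 2 / (1 + y ^ 2)) := by field_simp; ring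
    rw [hy, norm_neg, Real.norm_of_nonneg (by positivity), div_le_iff₀ (by positivity)]
    nlinarith [sq_nonneg y, sq_nonneg x]
  have h0 : (0 : ℝ) ∈ Icc (-|x|) |x| := by simp
  have hx : x ∈ Icc (-|x|) |x| := ⟨neg_abs_le x, le_abs_self x⟩
  have := (convex_Icc (-|x|) |x|).norm_image_sub_le_of_norm_hasDerivWithin_le
    (fun y _ => (hderiv y).hasDerivWithinAt) hbound h0 hx
  simpa [pow_succ, Real.norm_eq_abs] using this

theorem neg_mul_sin_sq_add_mul_sin_sq_add_mul_cos_sq (k l₁ l₂ α θ : ℝ) :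
    -k * sin θ ^ 2 + l₁ * sin (θ + α) ^ 2 + l₂ * cos (θ + α) ^ 2
      = (-k + l₁ + l₂) / 2
        + ((k + (l₂ - l₁) * cos (2 * α)) * cos (2 * θ)
          + (l₁ - l₂) * sin (2 * α) * sin (2 * θ)) / 2 := by
  rw [sin_sq_eq_half_sub θ, sin_sq_eq_half_sub (θ + α), cos_sq (θ + α),
    show 2 * (θ + α) = 2 * θ + 2 * α by ring, cos_add]
  ring

theorem mul_cos_add_mul_sin_eq_sqrt_mul_cos {u : ℝ} (hu : 0 < u) (v φ : ℝ) :
    u * cos φ + v * sin φ = √(u ^ 2 + v ^ 2) * cos (φ - arctan (v / u)) := by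
  have hsqrt : √(1 + (v / u) ^ 2) = √(u ^ 2 + v ^ 2) / u := by
    rw [show 1 + (v / u) ^ 2 = (u ^ 2 + v ^ 2) / u ^ 2 by field_simp,
      sqrt_div' _ (by positivity), sqrt_sq hu.le]
  have hR : 0 < √(u ^ 2 + v ^ 2) := sqrt_pos.2 (by positivity)
  rw [cos_sub, cos_arctan, sin_arctan, hsqrt]
  field_simp

theorem isMaxOn_half_arctan (A : ℝ) {u : ℝ} (hu : 0 < u) (v : ℝ) :
    IsMaxOn (fun θ => A + (u * cos (2 * θ) + v * sin (2 * θ)) / 2) univ (arctan (v / u) / 2) := by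
  refine isMaxOn_univ_iff.2 fun θ => ?_
  simp only [mul_cos_add_mul_sin_eq_sqrt_mul_cos hu,
    show 2 * (arctan (v / u) / 2) - arctan (v / u) = 0 by ring, cos_zero, mul_one]
  gcongr
  exact mul_le_of_le_one_right (sqrt_nonneg _) (cos_le_one _)

theorem eq_half_arctan_of_isMaxOn {A u v θ : ℝ} (hu : 0 < u) (hθ : θ ∈ Ioc (-(π / 2)) (π / 2))
    (hmax : IsMaxOn (fun θ => A + (u * cos (2 * θ) + v * sin (2 * θ)) / 2) univ θ) :
    θ = arctan (v / u) / 2 := by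
  have hle := isMaxOn_univ_iff.1 hmax (arctan (v / u) / 2)
  simp only [mul_cos_add_mul_sin_eq_sqrt_mul_cos hu,
    show 2 * (arctan (v / u) / 2) - arctan (v / u) = 0 by ring, cos_zero, mul_one] at hle
  have hR : 0 < √(u ^ 2 + v ^ 2) := sqrt_pos.2 (by positivity)
  have hcos : cos (2 * θ - arctan (v / u)) = 1 :=
    le_antisymm (cos_le_one _) (le_of_mul_le_mul_left (by linarith) hR)
  have := neg_pi_div_two_lt_arctan (v / u)
  have := arctan_lt_pi_div_two (v / u)
  rw [cos_eq_one_iff_of_lt_of_lt (by linarith [hθ.1]) (by linarith [hθ.2])] at hcos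
  linarith

theorem abs_arctan_div_sub_div_le {a w p : ℝ} (ha : 0 < a) (hp : 1 ≤ p)
    (hu : a * p ≤ 2 * ((p - 1) * a + w)) (v : ℝ) :
    |arctan (v / ((p - 1) * a + w)) - v / (a * p)|
      ≤ (8 * |v| ^ 3 / a ^ 3 + 2 * |v| * |a - w| / a ^ 2) / p ^ 2 := by
  set u := (p - 1) * a + w
  have hap : 0 < a * p := by positivity
  have hu0 : 0 < u := by linarith
  have hx : |v / u| ≤ 2 * |v| / (a * p) := by
    rw [abs_div, abs_of_pos hu0, div_le_div_iff₀ hu0 hap]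
    nlinarith [abs_nonneg v]
  have harctan : |arctan (v / u) - v / u| ≤ 8 * |v| ^ 3 / a ^ 3 / p ^ 2 :=
    calc |arctan (v / u) - v / u| ≤ |v / u| ^ 3 := abs_arctan_sub_self_le _
      _ ≤ (2 * |v| / (a * p)) ^ 3 := by gcongr
      _ = 8 * |v| ^ 3 / a ^ 3 / p ^ 2 / p := by field_simp; ring
      _ ≤ 8 * |v| ^ 3 / a ^ 3 / p ^ 2 := div_le_self (by positivity) hp
  have hdiv : |v / u - v / (a * p)| ≤ 2 * |v| * |a - w| / a ^ 2 / p ^ 2 := by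
    rw [div_sub_div _ _ hu0.ne' hap.ne', show v * (a * p) - u * v = v * (a - w) by ring,
      abs_div, abs_mul, abs_of_pos (mul_pos hu0 hap)]
    calc |v| * |a - w| / (u * (a * p)) ≤ |v| * |a - w| / (a * p / 2 * (a * p)) := by
          gcongr; linarith
      _ = 2 * |v| * |a - w| / a ^ 2 / p ^ 2 := by field_simp
  calc |arctan (v / u) - v / (a * p)|
      ≤ |arctan (v / u) - v / u| + |v / u - v / (a * p)| := abs_sub_le _ _ _
    _ ≤ _ := by rw [add_div]; exact add_le_add harctan hdiv

/-- Asymptotics of the optimal control for the `p`-Hamiltonian at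
non-characteristic points (diagonal Hessian): with
`f_p θ = −(p−1) r⁻¹ ρ² sin²θ + λ₁ sin²(θ+α) + λ₂ cos²(θ+α)` and
`C̄ = r (λ₁ − λ₂) sin (2α) / (2 ρ²)`, there are `p₀ > 1` and `K > 0` such that
for all `p ≥ p₀` the function `f_p` attains a global maximum on `ℝ`, and every
global maximizer `θ_p ∈ (−π/2, π/2]` satisfies `|θ_p − C̄/p| ≤ K/p²`. -/
theorem optimal_angle_asymptotics_diagonal (r ρ lam₁ lam₂ α : ℝ)
    (hr : 0 < r) (hρ : 0 < ρ)
    (f : ℝ → ℝ → ℝ)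
    (hf : ∀ p θ, f p θ = -(p - 1) * r⁻¹ * ρ ^ 2 * sin θ ^ 2
        + lam₁ * sin (θ + α) ^ 2 + lam₂ * cos (θ + α) ^ 2)
    (C : ℝ) (hC : C = r * (lam₁ - lam₂) * sin (2 * α) / (2 * ρ ^ 2)) :
    ∃ p₀ > (1 : ℝ), ∃ K > (0 : ℝ), ∀ p ≥ p₀,
      (∃ θ : ℝ, IsMaxOn (f p) univ θ) ∧
      ∀ θₚ ∈ Ioc (-(π / 2)) (π / 2),
        IsMaxOn (f p) univ θₚ → |θₚ - C / p| ≤ K / p ^ 2 := by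
  set a := r⁻¹ * ρ ^ 2
  have ha : 0 < a := by positivity
  set v := (lam₁ - lam₂) * sin (2 * α)
  set w := (lam₂ - lam₁) * cos (2 * α)
  set K := 8 * |v| ^ 3 / a ^ 3 + 2 * |v| * |a - w| / a ^ 2
  have hw : 0 ≤ 2 * |w| / a := by positivity
  refine ⟨2 + 2 * |w| / a, by linarith, K / 2 + 1, by positivity, fun p hp => ?_⟩
  have hu : a * p ≤ 2 * ((p - 1) * a + w) := by
    have := mul_le_mul_of_nonneg_left hp ha.le
    rw [mul_add, mul_div_cancel₀ _ ha.ne'] at this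
    linarith [neg_abs_le w]
  have hu0 : 0 < (p - 1) * a + w := by nlinarith
  have hfp : f p = fun θ => (-((p - 1) * a) + lam₁ + lam₂) / 2
      + (((p - 1) * a + w) * cos (2 * θ) + v * sin (2 * θ)) / 2 := by
    ext θ
    rw [hf, show -(p - 1) * r⁻¹ * ρ ^ 2 = -((p - 1) * a) by ring,
      neg_mul_sin_sq_add_mul_sin_sq_add_mul_cos_sq]
  refine ⟨⟨_, hfp ▸ isMaxOn_half_arctan _ hu0 v⟩, fun θ hθ hmax => ?_⟩
  rw [eq_half_arctan_of_isMaxOn hu0 hθ (hfp ▸ hmax)]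
  have hCp : C / p = v / (a * p) / 2 := by
    rw [hC]
    simp only [a, v]
    field_simp
  calc |arctan (v / ((p - 1) * a + w)) / 2 - C / p|
      = |arctan (v / ((p - 1) * a + w)) - v / (a * p)| / 2 := by
        rw [hCp, ← sub_div, abs_div, abs_two]
    _ ≤ K / p ^ 2 / 2 := by
        gcongr
        exact abs_arctan_div_sub_div_le ha (by linarith) hu v
    _ ≤ (K / 2 + 1) / p ^ 2 := by
        rw [div_right_comm]
        gcongr
        linarith
end

section
/- Fix r > 0, ρ > 0, λ₁, λ₂ ∈ ℝ and α ∈ ℝ. Then there exist p₀ > 1 and K > 0 such that for every p ≥ p₀, f_p attains a global minimum on [0, π), and every point θ ∈ [0, π) at which f_p attains its global minimum satisfies |θ − π/2| ≤ K/p. (For large p the minimizing angle lies near π/2, i.e. near the direction orthogonal to the horizontal gradient.) -/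
open Real Set

/-!
Write `f_p θ = -c sin² θ + λ₂ + (λ₁ - λ₂) sin² (θ + α)` with `c = (p - 1) ρ² / r`. Since `f_p` is
continuous and `π`-periodic it has a global minimum, attained in `[0, π)`, and a minimizer on
`[0, π)` is a global one. Comparing with `θ = π/2` gives `c cos² θ ≤ |λ₁ - λ₂|`, and the
critical-point equation `c sin 2θ = (λ₁ - λ₂) sin (2θ + 2α)` gives `c |sin 2θ| ≤ |λ₁ - λ₂|`.
With `δ = θ - π/2`, the first bound puts `δ` in `[-π/4, π/4]` once `c ≥ 4 |λ₁ - λ₂|`, and then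
Jordan's inequality turns the second into `|δ| ≤ π |λ₁ - λ₂| / (4c) = O(1/p)`.
-/

namespace Function.Periodic

variable {f : ℝ → ℝ} {c θ : ℝ}

theorem exists_mem_Ico₀_isMinOn (hp : Periodic f c) (hc : 0 < c) (hf : Continuous f) :
    ∃ θ ∈ Ico 0 c, IsMinOn f univ θ := by
  obtain ⟨_, ⟨x, rfl⟩, hx⟩ := (hp.compact_of_continuous hc.ne' hf).exists_isLeast (range_nonempty f)
  obtain ⟨θ, hθ, hxθ⟩ := hp.exists_mem_Ico₀ hc x
  exact ⟨θ, hθ, isMinOn_iff.2 fun z _ => hxθ ▸ hx ⟨z, rfl⟩⟩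

theorem isMinOn_univ_of_isMinOn_Ico₀ (hp : Periodic f c) (hc : 0 < c)
    (hθ : IsMinOn f (Ico 0 c) θ) : IsMinOn f univ θ :=
  isMinOn_iff.2 fun x _ =>
    let ⟨_, hy, hxy⟩ := hp.exists_mem_Ico₀ hc x
    hxy ▸ isMinOn_iff.1 hθ _ hy

end Function.Periodic

theorem abs_le_of_mul_sin_sq_le_of_mul_abs_sin_two_mul_le {δ b c : ℝ} (hδ : |δ| ≤ π / 2)
    (hc : 0 < c) (hbc : 4 * b ≤ c) (hsq : c * sin δ ^ 2 ≤ b) (h2 : c * |sin (2 * δ)| ≤ b) :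
    |δ| ≤ π * b / (4 * c) := by
  have hsin : |sin δ| ≤ 1 / 2 := by
    have : sin δ ^ 2 ≤ (1 / 2) ^ 2 := le_of_mul_le_mul_left (by linarith) hc
    simpa using sq_le_sq.1 this
  have hδ4 : |δ| ≤ π / 4 := by
    have := (mul_abs_le_abs_sin hδ).trans hsin
    rw [div_mul_eq_mul_div, div_le_iff₀ pi_pos] at this
    linarith
  have hjordan := mul_abs_le_abs_sin (x := 2 * δ) (by rw [abs_mul, abs_two]; linarith)
  rw [abs_mul, abs_two, div_mul_eq_mul_div, div_le_iff₀ pi_pos] at hjordan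
  rw [le_div_iff₀ (by positivity)]
  nlinarith [pi_pos]

/-- The integrand `f_p` with `c = (p - 1) ρ² / r`. -/
noncomputable def angleHamiltonian (c l₁ l₂ α θ : ℝ) : ℝ :=
  -c * sin θ ^ 2 + l₁ * sin (θ + α) ^ 2 + l₂ * cos (θ + α) ^ 2

namespace angleHamiltonian

variable {c l₁ l₂ α θ : ℝ}

theorem periodic : Function.Periodic (angleHamiltonian c l₁ l₂ α) π := fun θ => by
  unfold angleHamiltonian
  rw [add_right_comm θ π α, sin_add_pi, sin_add_pi, cos_add_pi]
  ring

theorem continuous : Continuous (angleHamiltonian c l₁ l₂ α) := by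
  unfold angleHamiltonian; fun_prop

theorem hasDerivAt :
    HasDerivAt (angleHamiltonian c l₁ l₂ α)
      (-c * sin (2 * θ) + (l₁ - l₂) * sin (2 * (θ + α))) θ := by
  have hshift : HasDerivAt (fun x => x + α) 1 θ := (hasDerivAt_id' θ).add_const α
  refine (((((hasDerivAt_sin θ).pow 2).const_mul (-c)).add ((hshift.sin.pow 2).const_mul l₁)).add
    ((hshift.cos.pow 2).const_mul l₂)).congr_deriv ?_
  simp only [sin_two_mul]
  ring

theorem mul_abs_sin_two_mul_le (hθ : IsLocalMin (angleHamiltonian c l₁ l₂ α) θ) :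
    c * |sin (2 * θ)| ≤ |l₁ - l₂| := by
  have hcrit : c * sin (2 * θ) = (l₁ - l₂) * sin (2 * (θ + α)) := by
    linarith [hθ.hasDerivAt_eq_zero hasDerivAt]
  calc c * |sin (2 * θ)| ≤ |c * sin (2 * θ)| := by
        rw [abs_mul]; exact mul_le_mul_of_nonneg_right (le_abs_self c) (abs_nonneg _)
    _ = |l₁ - l₂| * |sin (2 * (θ + α))| := by rw [hcrit, abs_mul]
    _ ≤ |l₁ - l₂| := mul_le_of_le_one_right (abs_nonneg _) (abs_sin_le_one _)

theorem mul_cos_sq_le (hθ : angleHamiltonian c l₁ l₂ α θ ≤ angleHamiltonian c l₁ l₂ α (π / 2)) :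
    c * cos θ ^ 2 ≤ |l₁ - l₂| := by
  have hdiff : |sin (π / 2 + α) ^ 2 - sin (θ + α) ^ 2| ≤ 1 :=
    abs_sub_le_of_nonneg_of_le (sq_nonneg _) (sin_sq_le_one _) (sq_nonneg _) (sin_sq_le_one _)
  have hosc : (l₁ - l₂) * (sin (π / 2 + α) ^ 2 - sin (θ + α) ^ 2) ≤ |l₁ - l₂| :=
    (le_abs_self _).trans (by rw [abs_mul]; exact mul_le_of_le_one_right (abs_nonneg _) hdiff)
  simp only [angleHamiltonian, sin_pi_div_two] at hθ
  linear_combination hθ + hosc + c * sin_sq_add_cos_sq θ - l₂ * sin_sq_add_cos_sq (θ + α)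
    + l₂ * sin_sq_add_cos_sq (π / 2 + α)

theorem abs_sub_pi_div_two_le (hc : 0 < c) (hcl : 4 * |l₁ - l₂| ≤ c) (hθ : θ ∈ Icc 0 π)
    (hmin : IsMinOn (angleHamiltonian c l₁ l₂ α) univ θ) :
    |θ - π / 2| ≤ π * |l₁ - l₂| / (4 * c) := by
  have hcos : cos θ = -sin (θ - π / 2) := by rw [sin_sub_pi_div_two, neg_neg]
  have hsin2 : sin (2 * θ) = -sin (2 * (θ - π / 2)) := by
    rw [mul_sub, mul_div_cancel₀ _ two_ne_zero, sin_sub_pi, neg_neg]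
  refine abs_le_of_mul_sin_sq_le_of_mul_abs_sin_two_mul_le ?_ hc hcl ?_ ?_
  · exact abs_le.2 ⟨by linarith [hθ.1], by linarith [hθ.2]⟩
  · simpa [hcos] using mul_cos_sq_le (isMinOn_iff.1 hmin (π / 2) (mem_univ _))
  · simpa [hsin2] using mul_abs_sin_two_mul_le (hmin.isLocalMin Filter.univ_mem)

end angleHamiltonian

theorem pi_mul_div_four_mul_sub_one_mul_le {a l p : ℝ} (ha : 0 < a) (hl : 0 ≤ l) (hp : 2 ≤ p) :
    π * l / (4 * ((p - 1) * a)) ≤ π * (l + 1) / a / p := by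
  rw [div_div, div_le_div_iff₀ (by nlinarith) (by positivity)]
  have hπa : 0 ≤ π * a := by positivity
  nlinarith [mul_nonneg (mul_nonneg hπa hl) (by linarith : 0 ≤ 3 * p - 4),
    mul_nonneg hπa (by linarith : 0 ≤ p - 1)]

/-- For large `p`, the function
`f_p θ = −(p−1) r⁻¹ ρ² sin²θ + λ₁ sin²(θ+α) + λ₂ cos²(θ+α)` attains a global
minimum on `[0, π)`, and every minimizer lies within `K/p` of `π/2`, i.e. near
the direction orthogonal to the horizontal gradient. -/
theorem minimizing_angle_near_pi_half (r ρ lam₁ lam₂ α : ℝ)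
    (hr : 0 < r) (hρ : 0 < ρ)
    (f : ℝ → ℝ → ℝ)
    (hf : ∀ p θ, f p θ = -(p - 1) * r⁻¹ * ρ ^ 2 * sin θ ^ 2
        + lam₁ * sin (θ + α) ^ 2 + lam₂ * cos (θ + α) ^ 2) :
    ∃ p₀ > (1 : ℝ), ∃ K > (0 : ℝ), ∀ p ≥ p₀,
      (∃ θ ∈ Ico (0 : ℝ) π, IsMinOn (f p) (Ico (0 : ℝ) π) θ) ∧
      ∀ θ ∈ Ico (0 : ℝ) π, IsMinOn (f p) (Ico (0 : ℝ) π) θ →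
        |θ - π / 2| ≤ K / p := by
  set l := |lam₁ - lam₂|
  set a := r⁻¹ * ρ ^ 2
  have ha : 0 < a := by positivity
  have hla : 0 ≤ 4 * l / a := by positivity
  refine ⟨2 + 4 * l / a, by linarith, π * (l + 1) / a, by positivity, fun p hp => ?_⟩
  have hc : 0 < (p - 1) * a := mul_pos (by linarith) ha
  have hcl : 4 * l ≤ (p - 1) * a := by
    have := (div_le_iff₀ ha).1 (by linarith : 4 * l / a ≤ p - 2)
    linarith
  have hfp : f p = angleHamiltonian ((p - 1) * a) lam₁ lam₂ α := funext fun θ => by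
    rw [hf, angleHamiltonian]; ring
  rw [hfp]
  refine ⟨?_, fun θ hθ hmin => ?_⟩
  · obtain ⟨θ, hθ, hmin⟩ := angleHamiltonian.periodic.exists_mem_Ico₀_isMinOn pi_pos
      angleHamiltonian.continuous
    exact ⟨θ, hθ, hmin.on_subset (subset_univ _)⟩
  calc |θ - π / 2| ≤ π * l / (4 * ((p - 1) * a)) :=
        angleHamiltonian.abs_sub_pi_div_two_le hc hcl (Ico_subset_Icc_self hθ)
          (angleHamiltonian.periodic.isMinOn_univ_of_isMinOn_Ico₀ pi_pos hmin)
    _ ≤ π * (l + 1) / a / p :=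
        pi_mul_div_four_mul_sub_one_mul_le ha (abs_nonneg _) (by linarith)
end
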